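/- arXiv:1107.1419 — 2 statements merged into one kernel-verified Lean document; each statement's English description precedes it below -/
import Mathlib

section
/- If U ⊂ ℝ² ≅ ℂ is a bounded simply connected domain and T : {|z| < 1} → U is a biholomorphism, then the sets U_n := T({|z| < 1 − 1/n}) are open, and U_n converges to U in the Hausdorff sense of open sets (equivalently, the complements in a large closed ball converge in Hausdorff distance), and the closures of U_n converge to the closure of U in Hausdorff distance. -/
/-!
By the open mapping theorem the `Uₙ` are open, and they increase to `U`. For the complements in
`B`: the points of `B` at distance `≥ ε` from `B \ U` form a compact subset of `U`, hence lie in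
`Uₙ` for large `n`, so every point of `B \ Uₙ` is `ε`-close to `B \ U`. For the closures: a finite
`ε`-net of the totally bounded set `U` is contained in `Uₙ` for large `n`.
-/

open Metric Filter Set Topology

theorem DifferentiableOn.isOpen_image_of_injOn {f : ℂ → ℂ} {U s : Set ℂ}
    (hf : DifferentiableOn ℂ f U) (hU : IsOpen U) (hUc : IsPreconnected U)
    (hUnt : U.Nontrivial) (hinj : InjOn f U) (hsU : s ⊆ U) (hs : IsOpen s) :
    IsOpen (f '' s) := by
  refine ((hf.analyticOnNhd hU).is_constant_or_isOpen hUc).resolve_left ?_ s hsU hs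
  rintro ⟨w, hw⟩
  obtain ⟨x, hx, y, hy, hxy⟩ := hUnt
  exact hxy (hinj hx hy ((hw x hx).trans (hw y hy).symm))

theorem Metric.iUnion_ball_sub_one_div {X : Type*} [PseudoMetricSpace X] (x : X) (r : ℝ) :
    ⋃ n : ℕ, ball x (r - 1 / (n + 1)) = ball x r := by
  ext y
  simp only [mem_iUnion, mem_ball]
  constructor
  · rintro ⟨n, hn⟩
    have : (0 : ℝ) < 1 / (n + 1) := Nat.one_div_pos_of_nat
    linarith
  · intro hy
    obtain ⟨n, hn⟩ := exists_nat_one_div_lt (sub_pos.2 hy)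
    exact ⟨n, by linarith⟩

theorem Metric.monotone_ball_sub_one_div {X : Type*} [PseudoMetricSpace X] (x : X) (r : ℝ) :
    Monotone fun n : ℕ => ball x (r - 1 / (n + 1)) :=
  fun _ _ hmn => ball_subset_ball (sub_le_sub_left (Nat.one_div_le_one_div hmn) r)

theorem Monotone.eventually_mem_of_mem_iUnion {X : Type*} {V : ℕ → Set X} (hV : Monotone V)
    {x : X} (hx : x ∈ ⋃ n, V n) : ∀ᶠ n in atTop, x ∈ V n := by
  obtain ⟨m, hm⟩ := mem_iUnion.1 hx
  exact eventually_atTop.2 ⟨m, fun n hn => hV hn hm⟩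

theorem IsCompact.eventually_subset_of_monotone {X : Type*} [TopologicalSpace X] {K : Set X}
    {V : ℕ → Set X} (hK : IsCompact K) (hVo : ∀ n, IsOpen (V n)) (hV : Monotone V)
    (hKV : K ⊆ ⋃ n, V n) : ∀ᶠ n in atTop, K ⊆ V n := by
  obtain ⟨m, hm⟩ := hK.elim_directed_cover V hVo hKV hV.directed_le
  exact eventually_atTop.2 ⟨m, fun n hn => hm.trans (hV hn)⟩

theorem tendsto_zero_of_nonneg_of_eventually_le {ι : Type*} {l : Filter ι} {f : ι → ℝ}
    (hf : ∀ i, 0 ≤ f i) (h : ∀ ε > 0, ∀ᶠ i in l, f i ≤ ε) : Tendsto f l (𝓝 0) :=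
  tendsto_order.2 ⟨fun _ ha => .of_forall fun i => ha.trans_le (hf i),
    fun _ ha => (h _ (half_pos ha)).mono fun _ hi => hi.trans_lt (half_lt_self ha)⟩

section HausdorffConvergence

variable {X : Type*} [PseudoMetricSpace X] {V : ℕ → Set X}

theorem tendsto_hausdorffDist_diff_iUnion {B : Set X} (hB : IsCompact B)
    (hVo : ∀ n, IsOpen (V n)) (hV : Monotone V) :
    Tendsto (fun n => hausdorffDist (B \ V n) (B \ ⋃ n, V n)) atTop (𝓝 0) := by
  rcases (B \ ⋃ n, V n).eq_empty_or_nonempty with hempty | hne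
  · simpa only [hempty, hausdorffDist_empty] using tendsto_const_nhds
  refine tendsto_zero_of_nonneg_of_eventually_le (fun _ => hausdorffDist_nonneg) fun ε hε => ?_
  set K := B ∩ {x | ε ≤ infDist x (B \ ⋃ n, V n)}
  have hK : IsCompact K :=
    hB.inter_right (isClosed_le continuous_const (continuous_infDist_pt _))
  have hKV : K ⊆ ⋃ n, V n := by
    rintro x ⟨hxB, hxε : ε ≤ infDist x (B \ ⋃ n, V n)⟩
    by_contra hxV
    rw [infDist_zero_of_mem (show x ∈ B \ ⋃ n, V n from ⟨hxB, hxV⟩)] at hxε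
    linarith
  filter_upwards [hK.eventually_subset_of_monotone hVo hV hKV] with n hn
  refine hausdorffDist_le_of_mem_dist hε.le (fun x hx => ?_) fun x hx => ?_
  · have : infDist x (B \ ⋃ n, V n) < ε := by
      by_contra! h
      exact hx.2 (hn ⟨hx.1, h⟩)
    obtain ⟨y, hy, hxy⟩ := (infDist_lt_iff hne).1 this
    exact ⟨y, hy, hxy.le⟩
  · exact ⟨x, ⟨hx.1, fun h => hx.2 (mem_iUnion_of_mem n h)⟩, by simpa using hε.le⟩

theorem tendsto_hausdorffDist_closure_iUnion (hV : Monotone V)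
    (hbdd : TotallyBounded (⋃ n, V n)) :
    Tendsto (fun n => hausdorffDist (closure (V n)) (closure (⋃ n, V n))) atTop (𝓝 0) := by
  simp only [hausdorffDist_closure]
  refine tendsto_zero_of_nonneg_of_eventually_le (fun _ => hausdorffDist_nonneg) fun ε hε => ?_
  obtain ⟨t, htV, htfin, hcover⟩ := finite_approx_of_totallyBounded hbdd ε hε
  have ht : ∀ᶠ n in atTop, t ⊆ V n :=
    (eventually_all_finite htfin).2 fun y hy => hV.eventually_mem_of_mem_iUnion (htV hy)
  filter_upwards [ht] with n hn
  refine hausdorffDist_le_of_mem_dist hε.le (fun x hx => ?_) fun x hx => ?_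
  · exact ⟨x, mem_iUnion_of_mem n hx, by simpa using hε.le⟩
  · obtain ⟨y, hy, hxy⟩ := mem_iUnion₂.1 (hcover hx)
    exact ⟨y, hn hy, (mem_ball.1 hxy).le⟩

end HausdorffConvergence

theorem stmt_1_general (U : Set ℂ) (hUbdd : Bornology.IsBounded U)
    (T : ℂ → ℂ) (hTdiff : DifferentiableOn ℂ T (ball 0 1))
    (hTinj : Set.InjOn T (ball 0 1)) (hTsurj : T '' ball 0 1 = U) :
    (∀ n : ℕ, IsOpen (T '' ball 0 (1 - 1 / (n + 1)))) ∧
    (∀ B : Set ℂ, IsCompact B → U ⊆ B →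
      Tendsto (fun n : ℕ => hausdorffDist (B \ T '' ball 0 (1 - 1 / (n + 1))) (B \ U))
        atTop (nhds 0)) ∧
    Tendsto (fun n : ℕ => hausdorffDist (closure (T '' ball 0 (1 - 1 / (n + 1))))
      (closure U)) atTop (nhds 0) := by
  have hVmono : Monotone fun n : ℕ => T '' ball 0 (1 - 1 / (n + 1)) :=
    fun _ _ hmn => image_mono (monotone_ball_sub_one_div 0 1 hmn)
  have hVU : ⋃ n : ℕ, T '' ball 0 (1 - 1 / (n + 1)) = U := by
    rw [← image_iUnion, iUnion_ball_sub_one_div, hTsurj]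
  have hVopen (n : ℕ) : IsOpen (T '' ball 0 (1 - 1 / (n + 1))) :=
    hTdiff.isOpen_image_of_injOn isOpen_ball (convex_ball 0 1).isPreconnected
      (infinite_of_mem_nhds 0 (isOpen_ball.mem_nhds (mem_ball_self one_pos))).nontrivial hTinj
      (ball_subset_ball (sub_le_self _ Nat.one_div_pos_of_nat.le)) isOpen_ball
  refine ⟨hVopen, fun B hB _ => ?_, ?_⟩
  · simpa only [hVU] using tendsto_hausdorffDist_diff_iUnion hB hVopen hVmono
  · have hUtb : TotallyBounded U := hUbdd.isCompact_closure.totallyBounded.subset subset_closure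
    simpa only [hVU] using tendsto_hausdorffDist_closure_iUnion hVmono (hVU ▸ hUtb)

/-- If `U ⊆ ℂ` is a bounded simply connected domain and `T` a biholomorphism from the unit
disk onto `U`, then the sets `Uₙ := T({|z| < 1 − 1/n})` are open, they converge to `U` in
the Hausdorff sense of open sets (the complements in any large compact set `B ⊇ U`
converge in Hausdorff distance), and their closures converge to `closure U` in Hausdorff
distance. -/
theorem stmt_1 (U : Set ℂ) (hUopen : IsOpen U) (hUbdd : Bornology.IsBounded U)
    (hUne : U.Nonempty) (hUconn : IsConnected U) (hUsc : SimplyConnectedSpace U)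
    (T : ℂ → ℂ) (hTdiff : DifferentiableOn ℂ T (ball 0 1))
    (hTinj : Set.InjOn T (ball 0 1)) (hTsurj : T '' ball 0 1 = U) :
    (∀ n : ℕ, IsOpen (T '' ball 0 (1 - 1 / (n + 1)))) ∧
    (∀ B : Set ℂ, IsCompact B → U ⊆ B →
      Tendsto (fun n : ℕ => hausdorffDist (B \ T '' ball 0 (1 - 1 / (n + 1))) (B \ U))
        atTop (nhds 0)) ∧
    Tendsto (fun n : ℕ => hausdorffDist (closure (T '' ball 0 (1 - 1 / (n + 1))))
      (closure U)) atTop (nhds 0) :=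
  stmt_1_general U hUbdd T hTdiff hTinj hTsurj
end

section
/- Hausdorff convergence of compact sets preserves bounds on the number of connected components: if (K_n) is a sequence of nonempty compact subsets of ℝ^N converging in Hausdorff distance to K, and each K_n has at most p connected components, then K has at most p connected components. In particular, Hausdorff limits of connected compact sets are connected. -/
/-!
If `Klim` had `p + 1` points in pairwise distinct connected components, any two of them could be
separated by splitting `Klim` into two disjoint compact pieces. For small `δ` the `δ`-thickenings
of the pieces are disjoint open sets, so no preconnected subset of the `δ`-neighbourhood of `Klim`
comes `δ`-close to both points. Once `hausdorffDist (K n) Klim < δ`, each of the `p + 1` points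
has a point of `K n` within `δ`, and by pigeonhole two of these lie in the same of the `p`
preconnected pieces of `K n`. Hence `Klim` has at most `p` components, and these cover it.
-/

open Metric Filter Set Topology

theorem nonempty_embedding_fin_or_nonempty_fin_succ_embedding (α : Type*) (p : ℕ) :
    Nonempty (α ↪ Fin p) ∨ Nonempty (Fin (p + 1) ↪ α) := by
  rcases le_or_gt (Cardinal.lift.{0} (Cardinal.mk α)) p with h | h
  · exact Or.inl (Cardinal.lift_mk_le'.1 (by simpa using h))
  · exact Or.inr (Cardinal.lift_mk_le'.1 (by simpa [← Order.add_one_le_iff] using h))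

theorem exists_isPreconnected_cover_or_exists_pairwise_notMem_connectedComponentIn
    {X : Type*} [TopologicalSpace X] (F : Set X) (p : ℕ) :
    (∃ A : Fin p → Set X, (∀ i, IsPreconnected (A i)) ∧ F = ⋃ i, A i) ∨
      ∃ y : Fin (p + 1) → X, (∀ i, y i ∈ F) ∧
        Pairwise fun i j => y j ∉ connectedComponentIn F (y i) := by
  rcases nonempty_embedding_fin_or_nonempty_fin_succ_embedding (ConnectedComponents F) p
    with ⟨⟨e⟩⟩ | ⟨⟨e⟩⟩
  · refine Or.inl ⟨fun i => (↑) '' {x : F | e x = i}, fun i => ?_, ?_⟩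
    by_cases h : ∃ x : F, e x = i
    · obtain ⟨x, rfl⟩ := h
      have hcomp : {z : F | e z = e x} = connectedComponent x := by
        ext z
        exact e.injective.eq_iff.trans ConnectedComponents.coe_eq_coe'
      simp only [hcomp]
      exact isPreconnected_connectedComponent.image _ continuous_subtype_val.continuousOn
    · push Not at h
      simp [h, isPreconnected_empty]
    · ext x
      simp
  · choose y hy using fun i => ConnectedComponents.surjective_coe (e i)
    refine Or.inr ⟨fun i => y i, fun i => (y i).2, fun i j hij hmem => hij (e.injective ?_)⟩
    rw [connectedComponentIn_eq_image (y i).2, Subtype.val_injective.mem_set_image] at hmem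
    rw [← hy i, ← hy j, eq_comm, ConnectedComponents.coe_eq_coe']
    exact hmem

theorem IsCompact.exists_isCompact_partition_of_notMem_connectedComponentIn
    {X : Type*} [TopologicalSpace X] [T2Space X] {F : Set X} (hF : IsCompact F) {x y : X}
    (hx : x ∈ F) (hy : y ∈ F) (hxy : y ∉ connectedComponentIn F x) :
    ∃ C D : Set X, IsCompact C ∧ IsCompact D ∧ Disjoint C D ∧ F = C ∪ D ∧ x ∈ C ∧ y ∈ D := by
  have : CompactSpace F := isCompact_iff_compactSpace.mp hF
  have hxy' : (⟨y, hy⟩ : F) ∉ connectedComponent ⟨x, hx⟩ := fun h =>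
    hxy (by rw [connectedComponentIn_eq_image hx]; exact ⟨_, h, rfl⟩)
  rw [connectedComponent_eq_iInter_isClopen, mem_iInter] at hxy'
  push Not at hxy'
  obtain ⟨⟨Z, hZ, hxZ⟩, hyZ⟩ := hxy'
  refine ⟨(↑) '' Z, (↑) '' Zᶜ, hZ.isClosed.isCompact.image continuous_subtype_val,
    hZ.compl.isClosed.isCompact.image continuous_subtype_val,
    (disjoint_image_iff Subtype.val_injective).mpr disjoint_compl_right, ?_,
    ⟨_, hxZ, rfl⟩, ⟨_, hyZ, rfl⟩⟩
  rw [← image_union, union_compl_self, image_univ, Subtype.range_coe]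

theorem Disjoint.eventually_not_isPreconnected_meets_both_thickenings {E : Type*}
    [PseudoMetricSpace E] {C D : Set E} (hCD : Disjoint C D) (hC : IsCompact C)
    (hD : IsClosed D) :
    ∀ᶠ δ in 𝓝 (0 : ℝ), ∀ A : Set E, IsPreconnected A → A ⊆ thickening δ (C ∪ D) →
      (A ∩ thickening δ C).Nonempty → (A ∩ thickening δ D).Nonempty → False := by
  obtain ⟨ε, hε, hdisj⟩ := hCD.exists_thickenings hC hD
  filter_upwards [gt_mem_nhds hε] with δ hδ A hA hAsub hAC hAD
  rw [thickening_union] at hAsub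
  obtain ⟨a, -, haC, haD⟩ := hA _ _ isOpen_thickening isOpen_thickening hAsub hAC hAD
  exact (hdisj.mono (thickening_mono hδ.le C) (thickening_mono hδ.le D)).le_bot ⟨haC, haD⟩

theorem IsCompact.eventually_not_isPreconnected_near_two_components {E : Type*} [MetricSpace E]
    {F : Set E} (hF : IsCompact F) {x y : E} (hx : x ∈ F) (hy : y ∈ F)
    (hxy : y ∉ connectedComponentIn F x) :
    ∀ᶠ δ in 𝓝 (0 : ℝ), ∀ A : Set E, IsPreconnected A → A ⊆ thickening δ F →
      (A ∩ ball x δ).Nonempty → (A ∩ ball y δ).Nonempty → False := by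
  obtain ⟨C, D, hC, hD, hCD, rfl, hxC, hyD⟩ :=
    hF.exists_isCompact_partition_of_notMem_connectedComponentIn hx hy hxy
  filter_upwards [hCD.eventually_not_isPreconnected_meets_both_thickenings hC hD.isClosed]
    with δ hδ A hA hAsub hAx hAy
  exact hδ A hA hAsub (hAx.mono (inter_subset_inter_right _ (ball_subset_thickening hxC δ)))
    (hAy.mono (inter_subset_inter_right _ (ball_subset_thickening hyD δ)))

theorem subset_thickening_of_hausdorffDist_lt {E : Type*} [PseudoMetricSpace E] {s t : Set E}
    {δ : ℝ} (hfin : hausdorffEDist s t ≠ ⊤) (hδ : hausdorffDist s t < δ) :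
    s ⊆ thickening δ t := fun _ hx =>
  mem_thickening_iff.mpr (exists_dist_lt_of_hausdorffDist_lt hx hδ hfin)

theorem stmt_4_general (N p : ℕ) (K : ℕ → Set (EuclideanSpace ℝ (Fin N)))
    (Klim : Set (EuclideanSpace ℝ (Fin N)))
    (hcpt : ∀ n, IsCompact (K n)) (hne : ∀ n, (K n).Nonempty)
    (hKlimcpt : IsCompact Klim)
    (hconv : Tendsto (fun n => hausdorffDist (K n) Klim) atTop (nhds 0))
    (hcomp : ∀ n, ∃ A : Fin p → Set (EuclideanSpace ℝ (Fin N)),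
      (∀ i, IsPreconnected (A i)) ∧ K n = ⋃ i, A i) :
    ∃ A : Fin p → Set (EuclideanSpace ℝ (Fin N)),
      (∀ i, IsPreconnected (A i)) ∧ Klim = ⋃ i, A i := by
  refine (exists_isPreconnected_cover_or_exists_pairwise_notMem_connectedComponentIn Klim p
    ).resolve_right ?_
  rintro ⟨y, hyK, hy⟩
  have hsep : ∀ᶠ δ in 𝓝 (0 : ℝ), ∀ i j, i ≠ j → ∀ A, IsPreconnected A →
      A ⊆ thickening δ Klim → (A ∩ ball (y i) δ).Nonempty → (A ∩ ball (y j) δ).Nonempty → False :=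
    eventually_all.2 fun i => eventually_all.2 fun j => eventually_imp_distrib_left.2 fun hij =>
      hKlimcpt.eventually_not_isPreconnected_near_two_components (hyK i) (hyK j) (hy hij)
  obtain ⟨δ, hδsep, hδ⟩ := ((hsep.filter_mono nhdsWithin_le_nhds).and
    (self_mem_nhdsWithin : ∀ᶠ δ in 𝓝[>] (0 : ℝ), 0 < δ)).exists
  obtain ⟨n, hn⟩ := (hconv.eventually (gt_mem_nhds hδ)).exists
  have hfin : hausdorffEDist (K n) Klim ≠ ⊤ :=
    hausdorffEDist_ne_top_of_nonempty_of_bounded (hne n) ⟨y 0, hyK 0⟩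
      (hcpt n).isBounded hKlimcpt.isBounded
  choose b hbK hb using fun i => exists_dist_lt_of_hausdorffDist_lt' (hyK i) hn hfin
  obtain ⟨A, hA, hKA⟩ := hcomp n
  choose σ hσ using fun i => mem_iUnion.mp (hKA ▸ hbK i)
  obtain ⟨i, j, hij, hσij⟩ := Fintype.exists_ne_map_eq_of_card_lt σ (by simp)
  refine hδsep i j hij (A (σ i)) (hA _) ?_ ⟨b i, hσ i, hb i⟩ ⟨b j, hσij ▸ hσ j, hb j⟩
  exact (subset_iUnion A _).trans (hKA ▸ subset_thickening_of_hausdorffDist_lt hfin hn)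

/-- Hausdorff convergence of compact sets preserves bounds on the number of connected
components: if each `K n` is a nonempty compact subset of ℝ^N with at most `p` connected
components (i.e. it is a union of `p` connected pieces) and `K n → K` in Hausdorff
distance with `K` compact and nonempty, then `K` has at most `p` connected components. -/
theorem stmt_4 (N p : ℕ) (K : ℕ → Set (EuclideanSpace ℝ (Fin N)))
    (Klim : Set (EuclideanSpace ℝ (Fin N)))
    (hcpt : ∀ n, IsCompact (K n)) (hne : ∀ n, (K n).Nonempty)
    (hKlimcpt : IsCompact Klim) (hKlimne : Klim.Nonempty)
    (hconv : Tendsto (fun n => hausdorffDist (K n) Klim) atTop (nhds 0))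
    (hcomp : ∀ n, ∃ A : Fin p → Set (EuclideanSpace ℝ (Fin N)),
      (∀ i, IsPreconnected (A i)) ∧ K n = ⋃ i, A i) :
    ∃ A : Fin p → Set (EuclideanSpace ℝ (Fin N)),
      (∀ i, IsPreconnected (A i)) ∧ Klim = ⋃ i, A i :=
  stmt_4_general N p K Klim hcpt hne hKlimcpt hconv hcomp
end
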